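/- Let Q be a minimal conjunctive query, 𝒱 a finite set of views, and Q_R a 𝒱-rewriting of Q with an expansion Q_E w.r.t. 𝒱 obtained from applications α_1,…,α_m of views V_1,…,V_m ∈ 𝒱 fulfilling quantified variable disjointness, such that (after renaming) head(Q) = head(Q_E) = head(Q_R), body(Q) ⊆ body(Q_E), and there is a homomorphism h' from Q_E to Q that is the identity on vars(Q). For each i let 𝒜_i = {A ∈ body(Q) | i is minimal with A ∈ α_i(body(V_i))} and let h'_i be the restriction of h' to vars(α_i(V_i)). Then (𝒜_1,V_1,α_1,h'_1),…,(𝒜_m,V_m,α_m,h'_m) is a cover partition for Q over 𝒱. -/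

import Mathlib

/-- A relational atom (or fact): a relation symbol with a list of arguments.
Arguments are natural numbers, serving both as variables and as data values. -/
structure Atom where
  rel : ℕ
  args : List ℕ
deriving DecidableEq

/-- Apply a substitution to an atom. -/
def mapAtom (f : ℕ → ℕ) (A : Atom) : Atom := ⟨A.rel, A.args.map f⟩

/-- The variables of an atom. -/
def Atom.vars (A : Atom) : Finset ℕ := A.args.toFinset

/-- The variables of a finite set of atoms. -/
def varsOf (B : Finset Atom) : Finset ℕ := B.biUnion Atom.vars

/-- A conjunctive query: a head atom and a finite set of body atoms. -/
structure CQ where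
  head : Atom
  body : Finset Atom
deriving DecidableEq

/-- All variables of a conjunctive query. -/
def CQ.vars (Q : CQ) : Finset ℕ := Q.head.vars ∪ varsOf Q.body

/-- A schema: a set of relation symbols together with an arity function. -/
structure Schema where
  rels : Set ℕ
  ar : ℕ → ℕ

/-- An atom (or fact) over a schema. -/
def atomOver (σ : Schema) (A : Atom) : Prop :=
  A.rel ∈ σ.rels ∧ A.args.length = σ.ar A.rel

/-- `Q` is a (well-formed) conjunctive query over schema `σ`:
nonempty body of σ-atoms, head relation symbol not in σ, and safety. -/
def isCQ (σ : Schema) (Q : CQ) : Prop :=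
  Q.body.Nonempty ∧ (∀ A ∈ Q.body, atomOver σ A) ∧
  Q.head.rel ∉ σ.rels ∧ Q.head.vars ⊆ varsOf Q.body

/-- A database is a set of facts (finiteness is imposed where needed). -/
abbrev Database := Set Atom

/-- A database over a schema. -/
def isDBOver (σ : Schema) (D : Database) : Prop := ∀ F ∈ D, atomOver σ F

/-- The result of a conjunctive query on a database. -/
def evalCQ (Q : CQ) (D : Database) : Set Atom :=
  { F | ∃ ν : ℕ → ℕ, (∀ A ∈ Q.body, mapAtom ν A ∈ D) ∧ mapAtom ν Q.head = F }

/-- Containment of conjunctive queries. -/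
def containedCQ (Q1 Q2 : CQ) : Prop :=
  ∀ D : Database, D.Finite → evalCQ Q1 D ⊆ evalCQ Q2 D

/-- Equivalence of conjunctive queries. -/
def equivCQ (Q1 Q2 : CQ) : Prop :=
  ∀ D : Database, D.Finite → evalCQ Q1 D = evalCQ Q2 D

/-- A conjunctive query is minimal if no equivalent CQ has strictly fewer body atoms. -/
def isMinimal (Q : CQ) : Prop :=
  ∀ Q2 : CQ, equivCQ Q Q2 → Q.body.card ≤ Q2.body.card

/-- A homomorphism from `Q2` to `Q1`. -/
def isHom (h : ℕ → ℕ) (Q2 Q1 : CQ) : Prop :=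
  (∀ A ∈ Q2.body, mapAtom h A ∈ Q1.body) ∧ mapAtom h Q2.head = Q1.head

/-- A body homomorphism from `Q2` to `Q1`. -/
def isBodyHom (h : ℕ → ℕ) (Q2 Q1 : CQ) : Prop :=
  ∀ A ∈ Q2.body, mapAtom h A ∈ Q1.body

/-- A set of views over σ: each view is a CQ over σ and views have
pairwise distinct head relation symbols. -/
def isViewSet (σ : Schema) (𝒱 : Finset CQ) : Prop :=
  (∀ V ∈ 𝒱, isCQ σ V) ∧
  ∀ V ∈ 𝒱, ∀ W ∈ 𝒱, V ≠ W → V.head.rel ≠ W.head.rel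

/-- The 𝒱-defined database 𝒱(D). -/
def viewDB (𝒱 : Finset CQ) (D : Database) : Database :=
  ⋃ V ∈ 𝒱, evalCQ V D

/-- `Q'` is a CQ over the schema σ_𝒱 of the head relations of the views 𝒱. -/
def overViews (𝒱 : Finset CQ) (Q' : CQ) : Prop :=
  Q'.body.Nonempty ∧
  (∀ A ∈ Q'.body, ∃ V ∈ 𝒱, A.rel = V.head.rel ∧ A.args.length = V.head.args.length) ∧
  (∀ V ∈ 𝒱, Q'.head.rel ≠ V.head.rel) ∧
  Q'.head.vars ⊆ varsOf Q'.body

/-- `Q'` is a 𝒱-rewriting of `Q`: `Q'` is over σ_𝒱 and `Q'(𝒱(D)) = Q(D)`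
for every (finite) database `D` over σ. -/
def isRewriting (σ : Schema) (𝒱 : Finset CQ) (Q Q' : CQ) : Prop :=
  overViews 𝒱 Q' ∧
  ∀ D : Database, D.Finite → isDBOver σ D →
    evalCQ Q' (viewDB 𝒱 D) = evalCQ Q D

/-- `T` is a join tree for the atom set `B`. -/
def joinTreeProp (B : Finset Atom) (T : SimpleGraph {A : Atom // A ∈ B}) : Prop :=
  T.IsTree ∧
  ∀ (x : ℕ) (A A' : {A : Atom // A ∈ B}) (p : T.Walk A A'), p.IsPath →
    x ∈ A.1.vars → x ∈ A'.1.vars → ∀ C ∈ p.support, x ∈ C.1.vars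

/-- The atom set `B` has a join tree. -/
def hasJoinTree (B : Finset Atom) : Prop :=
  ∃ T : SimpleGraph {A : Atom // A ∈ B}, joinTreeProp B T

/-- A conjunctive query is acyclic if its body has a join tree. -/
def isAcyclicCQ (Q : CQ) : Prop := hasJoinTree Q.body

/-- A conjunctive query is free-connex acyclic. -/
def isFreeConnex (Q : CQ) : Prop :=
  isAcyclicCQ Q ∧ hasJoinTree (insert Q.head Q.body)

/-- The bridge variables of `𝒜 ⊆ body(Q)`. -/
def bvars (Q : CQ) (𝒜 : Finset Atom) : Finset ℕ :=
  varsOf 𝒜 ∩ (Q.head.vars ∪ varsOf (Q.body \ 𝒜))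

/-- An application of a view `V`: a substitution that does not unify any
quantified variable of `V` with another variable of `V`. -/
def isApplication (V : CQ) (α : ℕ → ℕ) : Prop :=
  ∀ x ∈ varsOf V.body, x ∉ V.head.vars →
    ∀ y ∈ CQ.vars V, y ≠ x → α x ≠ α y

/-- The query α(V). -/
def applyCQ (α : ℕ → ℕ) (V : CQ) : CQ :=
  ⟨mapAtom α V.head, V.body.image (mapAtom α)⟩

/-- `(𝒜, V, α, ψ)` is a cover description for `Q`. -/
def isCoverDesc (Q : CQ) (𝒜 : Finset Atom) (V : CQ) (α ψ : ℕ → ℕ) : Prop :=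
  𝒜 ⊆ Q.body ∧ isApplication V α ∧
  𝒜 ⊆ V.body.image (mapAtom α) ∧
  bvars Q 𝒜 ⊆ V.head.vars.image α ∧
  isBodyHom ψ (applyCQ α V) Q ∧
  ∀ x ∈ varsOf 𝒜, ψ x = x

/-- A cover partition for `Q` over `𝒱`: a collection of cover descriptions
whose atom sets partition `body(Q)`. -/
def isCoverPartition (Q : CQ) (𝒱 : Finset CQ) (m : ℕ)
    (𝒜 : Fin m → Finset Atom) (V : Fin m → CQ) (α ψ : Fin m → ℕ → ℕ) : Prop :=
  (∀ i, V i ∈ 𝒱 ∧ isCoverDesc Q (𝒜 i) (V i) (α i) (ψ i)) ∧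
  ∀ A ∈ Q.body, ∃! i, A ∈ 𝒜 i

/-- Consistency of a cover partition: a variable of any `α_j(V_j)` lies in the
range of another `α_i` only if it also lies in `bvars(𝒜_j)`. -/
def isConsistent (Q : CQ) (m : ℕ) (𝒜 : Fin m → Finset Atom) (V : Fin m → CQ)
    (α : Fin m → ℕ → ℕ) : Prop :=
  ∀ i j : Fin m, i ≠ j → ∀ z ∈ CQ.vars (applyCQ (α j) (V j)),
    (∃ x ∈ CQ.vars (V i), α i x = z) → z ∈ bvars Q (𝒜 j)

/-- The query `Q_𝒞` induced by a (consistent) cover partition. -/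
def inducedCQ (Q : CQ) (m : ℕ) (V : Fin m → CQ) (α : Fin m → ℕ → ℕ) : CQ :=
  ⟨Q.head, Finset.image (fun i => mapAtom (α i) (V i).head) Finset.univ⟩

/-- Quantified variable disjointness for a family of view applications. -/
def QVD (m : ℕ) (V : Fin m → CQ) (α : Fin m → ℕ → ℕ) : Prop :=
  ∀ i j : Fin m, i ≠ j → ∀ x ∈ varsOf (V i).body, x ∉ (V i).head.vars →
    ∀ y ∈ CQ.vars (V j), α i x ≠ α j y

/-- `QE` is an expansion of `Q'` with respect to the views `𝒱`. -/
def isExpansion (𝒱 : Finset CQ) (Q' QE : CQ) : Prop :=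
  ∃ (m : ℕ) (A' : Fin m → Atom) (V : Fin m → CQ) (α : Fin m → ℕ → ℕ),
    (∀ i, V i ∈ 𝒱 ∧ isApplication (V i) (α i) ∧ A' i = mapAtom (α i) (V i).head) ∧
    Q'.body = Finset.image A' Finset.univ ∧
    QVD m V α ∧
    QE.head = Q'.head ∧
    QE.body = Finset.biUnion Finset.univ (fun i => (V i).body.image (mapAtom (α i)))

/-- `atoms(x)`: the body atoms of `Q` containing the variable `x`. -/
def atomsWith (Q : CQ) (x : ℕ) : Finset Atom :=
  Q.body.filter (fun A => x ∈ A.vars)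

/-- Hierarchical conjunctive queries. -/
def isHierarchical (Q : CQ) : Prop :=
  ∀ x y : ℕ, atomsWith Q x ⊆ atomsWith Q y ∨ atomsWith Q y ⊆ atomsWith Q x ∨
    atomsWith Q x ∩ atomsWith Q y = ∅

/-- q-hierarchical conjunctive queries. -/
def isQHierarchical (Q : CQ) : Prop :=
  isHierarchical Q ∧ ∀ x y : ℕ, atomsWith Q x ⊂ atomsWith Q y →
    x ∈ Q.head.vars → y ∈ Q.head.vars

/-- `P` is a partition of `body(Q)` witnessing weak head arity at most `k`. -/
def witnessesWHA (Q : CQ) (k n : ℕ) (P : Fin n → Finset Atom) : Prop :=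
  (∀ i, (P i).Nonempty) ∧ (∀ i, P i ⊆ Q.body) ∧ (∀ A ∈ Q.body, ∃! i, A ∈ P i) ∧
  (∀ i, (varsOf (P i) ∩ Q.head.vars).card ≤ k) ∧
  (∀ i j, i ≠ j → ∀ x ∈ varsOf (P i), x ∈ varsOf (P j) → x ∈ Q.head.vars)

/-- `Q` has weak head arity at most `k`. -/
def hasWHAle (Q : CQ) (k : ℕ) : Prop := ∃ n P, witnessesWHA Q k n P

/-- The weak head arity of `Q`. -/
noncomputable def weakHeadArity (Q : CQ) : ℕ := sInf {k | hasWHAle Q k}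

/-- The cover graph of `Q`: vertices are the body atoms, with an edge between
two atoms iff they share a variable not occurring in the head. -/
def coverGraph (Q : CQ) : SimpleGraph {A : Atom // A ∈ Q.body} :=
  SimpleGraph.fromRel (fun A B => ∃ x, x ∈ A.1.vars ∧ x ∈ B.1.vars ∧ x ∉ Q.head.vars)

/-- A subset `s` of the atom set `B` is connected in the (join) tree `T`. -/
def connectedIn (B : Finset Atom) (T : SimpleGraph {A : Atom // A ∈ B}) (s : Finset Atom) : Prop :=
  (T.induce {A : {A : Atom // A ∈ B} | A.1 ∈ s}).Connected

/-!
An atom of `𝒜_i` lies in `α_i(body(V_i))`, so each of its variables is `α_i(x)` for a variable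
`x` of `V_i`. If `x` were quantified, the application condition and quantified variable
disjointness would make `α_i(x)` occur in no other `α_j(y)`. But a bridge variable also occurs
in `head(Q) = head(Q_R)`, whose variables come (by safety of `Q_R`) from the heads `α_j(head(V_j))`,
or in an atom of `body(Q) ∖ 𝒜_i`, which lies in `α_k(body(V_k))` for the index `k ≠ i` of the
block containing it. Either way `x` is a head variable of `V_i`.
-/

theorem existsUnique_and_forall_lt_not {ι : Type*} [LinearOrder ι] [WellFoundedLT ι]
    {p : ι → Prop} (h : ∃ i, p i) : ∃! i, p i ∧ ∀ j < i, ¬ p j := by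
  obtain ⟨i, hi, hmin⟩ := wellFounded_lt.has_min {i | p i} h
  refine ⟨i, ⟨hi, fun j hj hpj => hmin j hpj hj⟩, fun k ⟨hk, hkmin⟩ => ?_⟩
  rcases lt_trichotomy k i with hki | rfl | hik
  exacts [(hmin k hk hki).elim, rfl, (hkmin i hik hi).elim]

theorem mem_vars_mapAtom {f : ℕ → ℕ} {A : Atom} {z : ℕ} :
    z ∈ (mapAtom f A).vars ↔ ∃ x ∈ A.vars, f x = z := by
  simp [mapAtom, Atom.vars]

theorem mem_varsOf {B : Finset Atom} {x : ℕ} : x ∈ varsOf B ↔ ∃ A ∈ B, x ∈ A.vars :=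
  Finset.mem_biUnion

section ViewApplications

variable {m : ℕ} {V : Fin m → CQ} {α : Fin m → ℕ → ℕ}

theorem eq_of_apply_quantified_eq (happ : ∀ i, isApplication (V i) (α i)) (hqvd : QVD m V α)
    {i j : Fin m} {x y : ℕ} (hx : x ∈ varsOf (V i).body) (hxh : x ∉ (V i).head.vars)
    (hy : y ∈ (V j).vars) (hxy : α i x = α j y) : j = i ∧ y = x := by
  by_cases hji : j = i
  · subst hji
    exact ⟨rfl, by_contra fun hyx => happ j x hx hxh y hy hyx hxy⟩
  · exact (hqvd i j (Ne.symm hji) x hx hxh y hy hxy).elim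

theorem exists_head_preimage_of_mem_head_vars {QR : CQ} {A' : Fin m → Atom}
    (hsafe : QR.head.vars ⊆ varsOf QR.body) (hQRbody : QR.body = Finset.univ.image A')
    (hA' : ∀ i, A' i = mapAtom (α i) (V i).head) {z : ℕ} (hz : z ∈ QR.head.vars) :
    ∃ j, ∃ y ∈ (V j).head.vars, α j y = z := by
  obtain ⟨C, hC, hzC⟩ := mem_varsOf.1 (hsafe hz)
  rw [hQRbody] at hC
  obtain ⟨j, -, rfl⟩ := Finset.mem_image.1 hC
  rw [hA'] at hzC
  exact ⟨j, mem_vars_mapAtom.1 hzC⟩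

theorem bvars_subset_image_head_vars (happ : ∀ i, isApplication (V i) (α i))
    (hqvd : QVD m V α) {Q : CQ} {𝒜 : Fin m → Finset Atom}
    (h𝒜 : ∀ k, 𝒜 k ⊆ (V k).body.image (mapAtom (α k)))
    (hcover : ∀ C ∈ Q.body, ∃ k, C ∈ 𝒜 k)
    (hhead : ∀ z ∈ Q.head.vars, ∃ j, ∃ y ∈ (V j).head.vars, α j y = z) (i : Fin m) :
    bvars Q (𝒜 i) ⊆ (V i).head.vars.image (α i) := by
  intro z hz
  obtain ⟨hz𝒜, hzout⟩ := Finset.mem_inter.1 hz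
  obtain ⟨A, hA, hzA⟩ := mem_varsOf.1 hz𝒜
  obtain ⟨B, hB, rfl⟩ := Finset.mem_image.1 (h𝒜 i hA)
  obtain ⟨x, hxB, rfl⟩ := mem_vars_mapAtom.1 hzA
  by_cases hxh : x ∈ (V i).head.vars
  · exact Finset.mem_image_of_mem _ hxh
  have hx : x ∈ varsOf (V i).body := mem_varsOf.2 ⟨B, hB, hxB⟩
  exfalso
  rcases Finset.mem_union.1 hzout with hzh | hzC
  · obtain ⟨j, y, hy, hyx⟩ := hhead _ hzh
    obtain ⟨rfl, rfl⟩ :=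
      eq_of_apply_quantified_eq happ hqvd hx hxh (Finset.mem_union_left _ hy) hyx.symm
    exact hxh hy
  · obtain ⟨C, hC, hxC⟩ := mem_varsOf.1 hzC
    obtain ⟨hCQ, hCi⟩ := Finset.mem_sdiff.1 hC
    obtain ⟨k, hCk⟩ := hcover C hCQ
    obtain ⟨D, hD, rfl⟩ := Finset.mem_image.1 (h𝒜 k hCk)
    obtain ⟨y, hyD, hyx⟩ := mem_vars_mapAtom.1 hxC
    obtain ⟨rfl, -⟩ := eq_of_apply_quantified_eq happ hqvd hx hxh
      (Finset.mem_union_right _ (mem_varsOf.2 ⟨D, hD, hyD⟩)) hyx.symm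
    exact hCi hCk

end ViewApplications

theorem statement19_general (σ : Schema) (Q : CQ) (𝒱 : Finset CQ)
    (QR : CQ) (hrw : isRewriting σ 𝒱 Q QR)
    (m : ℕ) (A' : Fin m → Atom) (V : Fin m → CQ) (α : Fin m → ℕ → ℕ)
    (hV : ∀ i, V i ∈ 𝒱) (happ : ∀ i, isApplication (V i) (α i))
    (hA' : ∀ i, A' i = mapAtom (α i) (V i).head)
    (hQRbody : QR.body = Finset.image A' Finset.univ)
    (hqvd : QVD m V α)
    (QE : CQ) (hQEhead : QE.head = QR.head)
    (hQEbody : QE.body = Finset.biUnion Finset.univ (fun i => (V i).body.image (mapAtom (α i))))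
    (hheads : Q.head = QE.head)
    (hbodysub : Q.body ⊆ QE.body)
    (h' : ℕ → ℕ) (hh' : isHom h' QE Q) (hid : ∀ x ∈ CQ.vars Q, h' x = x)
    (𝒜 : Fin m → Finset Atom)
    (h𝒜 : ∀ (i : Fin m) (A : Atom), A ∈ 𝒜 i ↔
      A ∈ Q.body ∧ A ∈ (V i).body.image (mapAtom (α i)) ∧
        ∀ j : Fin m, j < i → A ∉ (V j).body.image (mapAtom (α j))) :
    isCoverPartition Q 𝒱 m 𝒜 V α (fun _ => h') := by
  have hpart : ∀ A ∈ Q.body, ∃! i, A ∈ 𝒜 i := by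
    intro A hA
    have hAE := hbodysub hA
    rw [hQEbody, Finset.mem_biUnion] at hAE
    obtain ⟨j, -, hj⟩ := hAE
    simpa only [h𝒜, hA, true_and] using existsUnique_and_forall_lt_not ⟨j, hj⟩
  have h𝒜Q i : 𝒜 i ⊆ Q.body := fun A hA => ((h𝒜 i A).1 hA).1
  have h𝒜V i : 𝒜 i ⊆ (V i).body.image (mapAtom (α i)) := fun A hA => ((h𝒜 i A).1 hA).2.1
  have hhead : ∀ z ∈ Q.head.vars, ∃ j, ∃ y ∈ (V j).head.vars, α j y = z := by
    rw [hheads, hQEhead]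
    exact fun z => exists_head_preimage_of_mem_head_vars hrw.1.2.2.2 hQRbody hA'
  refine ⟨fun i => ⟨hV i, h𝒜Q i, happ i, h𝒜V i,
    bvars_subset_image_head_vars happ hqvd h𝒜V (fun C hC => (hpart C hC).exists) hhead i,
    fun B hB => hh'.1 B ?_, fun x hx => hid x ?_⟩, hpart⟩
  · rw [hQEbody]
    exact Finset.mem_biUnion.2 ⟨i, Finset.mem_univ i, hB⟩
  · obtain ⟨A, hA, hxA⟩ := mem_varsOf.1 hx
    exact Finset.mem_union_right _ (mem_varsOf.2 ⟨A, h𝒜Q i hA, hxA⟩)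

/-- Let `Q` be minimal, `Q_R` a 𝒱-rewriting of `Q` with expansion `QE`
obtained from applications `α_i` of views `V_i ∈ 𝒱` fulfilling quantified variable
disjointness, with `head(Q) = head(QE) = head(Q_R)`, `body(Q) ⊆ body(QE)`, and `h'` a
homomorphism from `QE` to `Q` that is the identity on `vars(Q)`. With
`𝒜_i = {A ∈ body(Q) | i minimal with A ∈ α_i(body(V_i))}` and `ψ_i = h'` (the
restriction of `h'` to `vars(α_i(V_i))`), the tuples `(𝒜_i, V_i, α_i, ψ_i)` form a
cover partition for `Q` over `𝒱`. -/
theorem statement19 (σ : Schema) (Q : CQ) (hQ : isCQ σ Q) (hmin : isMinimal Q)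
    (𝒱 : Finset CQ) (h𝒱 : isViewSet σ 𝒱) (hfresh : ∀ V ∈ 𝒱, Q.head.rel ≠ V.head.rel)
    (QR : CQ) (hrw : isRewriting σ 𝒱 Q QR)
    (m : ℕ) (A' : Fin m → Atom) (V : Fin m → CQ) (α : Fin m → ℕ → ℕ)
    (hV : ∀ i, V i ∈ 𝒱) (happ : ∀ i, isApplication (V i) (α i))
    (hA' : ∀ i, A' i = mapAtom (α i) (V i).head)
    (hQRbody : QR.body = Finset.image A' Finset.univ)
    (hqvd : QVD m V α)
    (QE : CQ) (hQEhead : QE.head = QR.head)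
    (hQEbody : QE.body = Finset.biUnion Finset.univ (fun i => (V i).body.image (mapAtom (α i))))
    (hheads : Q.head = QE.head)
    (hbodysub : Q.body ⊆ QE.body)
    (h' : ℕ → ℕ) (hh' : isHom h' QE Q) (hid : ∀ x ∈ CQ.vars Q, h' x = x)
    (𝒜 : Fin m → Finset Atom)
    (h𝒜 : ∀ (i : Fin m) (A : Atom), A ∈ 𝒜 i ↔
      A ∈ Q.body ∧ A ∈ (V i).body.image (mapAtom (α i)) ∧
        ∀ j : Fin m, j < i → A ∉ (V j).body.image (mapAtom (α j))) :
    isCoverPartition Q 𝒱 m 𝒜 V α (fun _ => h') :=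
  statement19_general σ Q 𝒱 QR hrw m A' V α hV happ hA' hQRbody hqvd QE hQEhead hQEbody hheads
    hbodysub h' hh' hid 𝒜 h𝒜
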